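/- arXiv:1102.1227 — 2 statements merged into one kernel-verified Lean document; each statement's English description precedes it below -/
import Mathlib

section
/- Let A be n×n orthogonal, ρ₀ ∈ (0,1], and suppose ‖A_{JᶜT}ᵀ A_{JᶜT}‖ ≤ 1 − ρ₀/2. Then for all vectors z ∈ ℝ^{|Jᶜ|} and w ∈ ℝ^{|T|}: ‖A_{Jᶜ•}ᵀ z + ι_T w‖₂² ≥ (1 − √(1 − ρ₀/2)) (‖z‖₂² + ‖w‖₂²) ≥ (ρ₀/4)(‖z‖₂² + ‖w‖₂²), where ι_T w denotes the vector in ℝⁿ equal to w on T and zero on Tᶜ. -/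
/-!
Put `u = A_{Jᶜ•}ᵀ z` and `v = ι_T w`. The rows of an orthogonal matrix are orthonormal, so
`‖u‖ = ‖z‖`, and `‖v‖ = ‖w‖`. The cross term is `⟨u, v⟩ = ⟨z, A_{Jᶜ•} v⟩ = ⟨z, A_{JᶜT} w⟩`, and
`‖A_{JᶜT} w‖² = ⟨w, A_{JᶜT}ᵀ A_{JᶜT} w⟩ ≤ (1 - ρ₀/2) ‖w‖²`, so by Cauchy–Schwarz
`|⟨u, v⟩| ≤ α ‖z‖ ‖w‖` with `α = √(1 - ρ₀/2)`. Expanding `‖u + v‖²` then gives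
`a² + b² - 2αab = (1 - α)(a² + b²) + α(a - b)² ≥ (1 - α)(a² + b²)`, and
`√(1 - ρ₀/2) ≤ 1 - ρ₀/4` gives the second inequality.
-/

open Matrix

/-- Spectral (ℓ²→ℓ² operator) norm of a real matrix. -/
noncomputable def specNorm {α β : Type*} [Fintype α] [Fintype β] [DecidableEq β]
    (B : Matrix α β ℝ) : ℝ :=
  ‖LinearMap.toContinuousLinearMap (Matrix.toEuclideanLin B)‖

/-- Euclidean (ℓ²) norm of a finitely indexed real vector. -/
noncomputable def l2 {α : Type*} [Fintype α] (v : α → ℝ) : ℝ := Real.sqrt (∑ i, v i ^ 2)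

/-- ℓ¹ norm of a finitely indexed real vector. -/
def l1 {α : Type*} [Fintype α] (v : α → ℝ) : ℝ := ∑ i, |v i|

/-- Submatrix of `A` with rows indexed by `J` and columns indexed by `T`. -/
def sub {n : ℕ} (A : Matrix (Fin n) (Fin n) ℝ) (J T : Finset (Fin n)) :
    Matrix J T ℝ := A.submatrix (fun i => (i : Fin n)) (fun j => (j : Fin n))

/-- Submatrix of `A` with rows indexed by `J` (all columns kept). -/
def rowSub {n : ℕ} (A : Matrix (Fin n) (Fin n) ℝ) (J : Finset (Fin n)) :
    Matrix J (Fin n) ℝ := A.submatrix (fun i => (i : Fin n)) id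

def extendByZero {ι : Type*} [DecidableEq ι] (T : Finset ι) (w : T → ℝ) : ι → ℝ :=
  fun i => if h : i ∈ T then w ⟨i, h⟩ else 0

section

variable {α : Type*} [Fintype α]

lemma l2_nonneg (v : α → ℝ) : 0 ≤ l2 v := Real.sqrt_nonneg _

lemma l2_sq (v : α → ℝ) : l2 v ^ 2 = v ⬝ᵥ v := by
  rw [l2, Real.sq_sqrt (by positivity)]
  simp only [dotProduct, sq]

lemma l2_eq_norm_toLp (v : α → ℝ) : l2 v = ‖WithLp.toLp 2 v‖ := by
  simp [l2, EuclideanSpace.norm_eq]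

lemma abs_dotProduct_le_l2_mul_l2 (x y : α → ℝ) : |x ⬝ᵥ y| ≤ l2 x * l2 y := by
  simpa [l2_eq_norm_toLp, EuclideanSpace.inner_eq_star_dotProduct, dotProduct_comm] using
    abs_real_inner_le_norm (WithLp.toLp 2 x) (WithLp.toLp 2 y)

lemma one_sub_mul_sq_add_sq_le_l2_add_sq {x y : α → ℝ} {c : ℝ} (hc : 0 ≤ c)
    (hxy : |x ⬝ᵥ y| ≤ c * (l2 x * l2 y)) :
    (1 - c) * (l2 x ^ 2 + l2 y ^ 2) ≤ l2 (x + y) ^ 2 := by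
  have expand : l2 (x + y) ^ 2 = l2 x ^ 2 + 2 * (x ⬝ᵥ y) + l2 y ^ 2 := by
    simp only [l2_sq, add_dotProduct, dotProduct_add, dotProduct_comm y x]
    ring
  nlinarith [neg_abs_le (x ⬝ᵥ y), mul_nonneg hc (sq_nonneg (l2 x - l2 y))]

end

section

variable {m n : Type*} [Fintype m] [Fintype n]

lemma l2_mulVec_le_specNorm_mul [DecidableEq n] (M : Matrix m n ℝ) (x : n → ℝ) :
    l2 (M *ᵥ x) ≤ specNorm M * l2 x := by
  rw [l2_eq_norm_toLp, l2_eq_norm_toLp]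
  exact (LinearMap.toContinuousLinearMap (toEuclideanLin M)).le_opNorm (WithLp.toLp 2 x)

lemma l2_mulVec_sq_le [DecidableEq n] (C : Matrix m n ℝ) (w : n → ℝ) :
    l2 (C *ᵥ w) ^ 2 ≤ specNorm (Cᵀ * C) * l2 w ^ 2 := by
  calc l2 (C *ᵥ w) ^ 2 = w ⬝ᵥ ((Cᵀ * C) *ᵥ w) := by
        rw [l2_sq, ← mulVec_mulVec, dotProduct_mulVec w, vecMul_transpose, dotProduct_comm]
    _ ≤ l2 w * l2 ((Cᵀ * C) *ᵥ w) := (le_abs_self _).trans (abs_dotProduct_le_l2_mul_l2 _ _)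
    _ ≤ l2 w * (specNorm (Cᵀ * C) * l2 w) :=
        mul_le_mul_of_nonneg_left (l2_mulVec_le_specNorm_mul _ _) (l2_nonneg w)
    _ = specNorm (Cᵀ * C) * l2 w ^ 2 := by ring

lemma l2_mulVec_le_sqrt_mul [DecidableEq n] {C : Matrix m n ℝ} {c : ℝ}
    (hC : specNorm (Cᵀ * C) ≤ c) (w : n → ℝ) : l2 (C *ᵥ w) ≤ √c * l2 w := by
  rw [← Real.sqrt_sq (l2_nonneg w), ← Real.sqrt_mul' _ (sq_nonneg _)]
  exact Real.le_sqrt_of_sq_le <|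
    (l2_mulVec_sq_le C w).trans (mul_le_mul_of_nonneg_right hC (sq_nonneg _))

lemma abs_dotProduct_mulVec_le_sqrt_mul [DecidableEq n] {C : Matrix m n ℝ} {c : ℝ}
    (hC : specNorm (Cᵀ * C) ≤ c) (z : m → ℝ) (w : n → ℝ) :
    |z ⬝ᵥ (C *ᵥ w)| ≤ √c * (l2 z * l2 w) :=
  calc |z ⬝ᵥ (C *ᵥ w)| ≤ l2 z * l2 (C *ᵥ w) := abs_dotProduct_le_l2_mul_l2 _ _
    _ ≤ l2 z * (√c * l2 w) :=
        mul_le_mul_of_nonneg_left (l2_mulVec_le_sqrt_mul hC w) (l2_nonneg z)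
    _ = √c * (l2 z * l2 w) := by ring

lemma l2_transpose_mulVec [DecidableEq m] {B : Matrix m n ℝ} (hB : B * Bᵀ = 1) (z : m → ℝ) :
    l2 (Bᵀ *ᵥ z) = l2 z := by
  have hsq : l2 (Bᵀ *ᵥ z) ^ 2 = l2 z ^ 2 := by
    rw [l2_sq, l2_sq, dotProduct_mulVec, vecMul_transpose, mulVec_mulVec, hB, one_mulVec,
      dotProduct_comm]
  exact (pow_left_inj₀ (l2_nonneg _) (l2_nonneg _) two_ne_zero).mp hsq

theorem one_sub_mul_le_l2_transpose_mulVec_add_sq [DecidableEq m] {B : Matrix m n ℝ}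
    (hB : B * Bᵀ = 1) {z : m → ℝ} {y : n → ℝ} {c : ℝ} (hc : 0 ≤ c)
    (hzy : |z ⬝ᵥ (B *ᵥ y)| ≤ c * (l2 z * l2 y)) :
    (1 - c) * (l2 z ^ 2 + l2 y ^ 2) ≤ l2 (Bᵀ *ᵥ z + y) ^ 2 := by
  rw [← l2_transpose_mulVec hB z] at hzy ⊢
  rw [dotProduct_mulVec, ← mulVec_transpose] at hzy
  exact one_sub_mul_sq_add_sq_le_l2_add_sq hc hzy

end

section

variable {ι : Type*} [Fintype ι] [DecidableEq ι]

lemma dotProduct_extendByZero (v : ι → ℝ) (T : Finset ι) (w : T → ℝ) :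
    v ⬝ᵥ extendByZero T w = (fun t : T => v t) ⬝ᵥ w := by
  simp only [dotProduct, extendByZero, mul_dite, mul_zero]
  rw [Finset.univ_eq_attach]
  exact (Finset.sum_attach_eq_sum_dite T fun t => v t * w t).symm

lemma l2_extendByZero (T : Finset ι) (w : T → ℝ) : l2 (extendByZero T w) = l2 w := by
  have hsq : l2 (extendByZero T w) ^ 2 = l2 w ^ 2 := by
    rw [l2_sq, l2_sq, dotProduct_extendByZero]
    congr 1
    funext t
    simp [extendByZero]
  exact (pow_left_inj₀ (l2_nonneg _) (l2_nonneg _) two_ne_zero).mp hsq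

end

lemma rowSub_mul_transpose {n : ℕ} {A : Matrix (Fin n) (Fin n) ℝ} (hA : A * Aᵀ = 1)
    (J : Finset (Fin n)) : rowSub A J * (rowSub A J)ᵀ = 1 := by
  rw [rowSub, transpose_submatrix, ← submatrix_mul _ _ _ _ _ Function.bijective_id, hA,
    submatrix_one _ Subtype.val_injective]

lemma rowSub_mulVec_extendByZero {n : ℕ} (A : Matrix (Fin n) (Fin n) ℝ) (J T : Finset (Fin n))
    (w : T → ℝ) : rowSub A J *ᵥ extendByZero T w = sub A J T *ᵥ w :=
  funext fun _ => dotProduct_extendByZero _ T w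

lemma sqrt_one_sub_half_le {ρ : ℝ} (hρ : ρ ≤ 4) : √(1 - ρ / 2) ≤ 1 - ρ / 4 :=
  Real.sqrt_le_iff.mpr ⟨by linarith, by nlinarith [sq_nonneg ρ]⟩

theorem stmt11_general {n : ℕ} (A : Matrix (Fin n) (Fin n) ℝ)
    (hA' : A * Aᵀ = 1) (J T : Finset (Fin n))
    (ρ₀ : ℝ) (hρ1 : ρ₀ ≤ 1)
    (hnorm : specNorm ((sub A Jᶜ T)ᵀ * sub A Jᶜ T) ≤ 1 - ρ₀ / 2)
    (z : ↥(Jᶜ) → ℝ) (w : ↥T → ℝ) :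
    l2 ((rowSub A Jᶜ)ᵀ.mulVec z +
        fun i : Fin n => if h : i ∈ T then w ⟨i, h⟩ else 0) ^ 2 ≥
      (1 - Real.sqrt (1 - ρ₀ / 2)) * (l2 z ^ 2 + l2 w ^ 2) ∧
    (1 - Real.sqrt (1 - ρ₀ / 2)) * (l2 z ^ 2 + l2 w ^ 2) ≥
      (ρ₀ / 4) * (l2 z ^ 2 + l2 w ^ 2) := by
  have hcross := abs_dotProduct_mulVec_le_sqrt_mul hnorm z w
  rw [← rowSub_mulVec_extendByZero, ← l2_extendByZero T w] at hcross
  have hlower := one_sub_mul_le_l2_transpose_mulVec_add_sq (rowSub_mul_transpose hA' Jᶜ)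
    (Real.sqrt_nonneg _) hcross
  rw [l2_extendByZero] at hlower
  refine ⟨hlower, mul_le_mul_of_nonneg_right ?_ (by positivity)⟩
  linarith [sqrt_one_sub_half_le (show ρ₀ ≤ 4 by linarith)]

theorem stmt11 {n : ℕ} (A : Matrix (Fin n) (Fin n) ℝ)
    (hA : Aᵀ * A = 1) (hA' : A * Aᵀ = 1) (J T : Finset (Fin n))
    (ρ₀ : ℝ) (hρ0 : 0 < ρ₀) (hρ1 : ρ₀ ≤ 1)
    (hnorm : specNorm ((sub A Jᶜ T)ᵀ * sub A Jᶜ T) ≤ 1 - ρ₀ / 2)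
    (z : ↥(Jᶜ) → ℝ) (w : ↥T → ℝ) :
    l2 ((rowSub A Jᶜ)ᵀ.mulVec z +
        fun i : Fin n => if h : i ∈ T then w ⟨i, h⟩ else 0) ^ 2 ≥
      (1 - Real.sqrt (1 - ρ₀ / 2)) * (l2 z ^ 2 + l2 w ^ 2) ∧
    (1 - Real.sqrt (1 - ρ₀ / 2)) * (l2 z ^ 2 + l2 w ^ 2) ≥
      (ρ₀ / 4) * (l2 z ^ 2 + l2 w ^ 2) :=
  stmt11_general A hA' J T ρ₀ hρ1 hnorm z w
end

section
/- Non-sparse extension of the dual certificate lemma: under the hypotheses of the dual certificate lemma with T now an arbitrary index set (x⋆ not necessarily supported on T), for every h and f = −A_{Ω•}h: ‖x⋆ + h‖₁ + λ‖e⋆ + f‖₁ ≥ ‖x⋆_T‖₁ + λ‖e⋆‖₁ − ‖x⋆_{Tᶜ}‖₁ + (1/4)(‖h_{Tᶜ}‖₁ + λ‖A_{J•}h‖₁). -/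
open Matrix

lemma sign_mul_self' (a : ℝ) : Real.sign a * a = |a| := by
  rcases lt_trichotomy a 0 with hc | hc | hc
  · rw [Real.sign_of_neg hc, abs_of_neg hc]; ring
  · simp [hc]
  · rw [Real.sign_of_pos hc, abs_of_pos hc]; ring

lemma abs_sign_le_one' (a : ℝ) : |Real.sign a| ≤ 1 := by
  rcases lt_trichotomy a 0 with hc | hc | hc
  · simp [Real.sign_of_neg hc]
  · simp [hc]
  · simp [Real.sign_of_pos hc]

lemma key1 (a b : ℝ) : |a| + Real.sign a * b ≤ |a + b| := by
  have h1 : Real.sign a * (a + b) ≤ |a + b| :=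
    calc Real.sign a * (a + b) ≤ |Real.sign a * (a + b)| := le_abs_self _
    _ = |Real.sign a| * |a + b| := abs_mul _ _
    _ ≤ 1 * |a + b| := mul_le_mul_of_nonneg_right (abs_sign_le_one' a) (abs_nonneg _)
    _ = |a + b| := one_mul _
  nlinarith [sign_mul_self' a]

/-- Non-sparse extension of the dual certificate lemma. -/
theorem stmt18 {n : ℕ} (A : Matrix (Fin n) (Fin n) ℝ) (hA : Aᵀ * A = 1)
    (Ω S T : Finset (Fin n)) (hSΩ : S ⊆ Ω) (J : Finset (Fin n)) (hJ : J = Ω \ S)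
    (xs : Fin n → ℝ)
    (es : Ω → ℝ) (hes : ∀ i : Ω, (i : Fin n) ∉ S → es i = 0)
    (lam : ℝ) (hlam : 0 < lam)
    (zx : Fin n → ℝ) (ze : Ω → ℝ)
    (h1 : zx = lam • (rowSub A Ω)ᵀ.mulVec ze)
    (h2T : ∀ i, i ∈ T → zx i = Real.sign (xs i))
    (h2Tc : ∀ i, i ∉ T → |zx i| ≤ 3 / 4)
    (h3S : ∀ i : Ω, (i : Fin n) ∈ S → ze i = Real.sign (es i))
    (h3J : ∀ i : Ω, (i : Fin n) ∈ J → |ze i| ≤ 3 / 4)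
    (h : Fin n → ℝ) (f : Ω → ℝ) (hf : f = -(rowSub A Ω).mulVec h) :
    l1 (fun i => xs i + h i) + lam * l1 (fun i : Ω => es i + f i) ≥
      (∑ i ∈ T, |xs i|) + lam * l1 es - (∑ i ∈ Tᶜ, |xs i|) +
        (1 / 4) * ((∑ i ∈ Tᶜ, |h i|) + lam * ∑ i ∈ J, |A.mulVec h i|) := by
  have hfval : ∀ i : Ω, f i = -(A.mulVec h (i : Fin n)) := by
    intro i
    rw [hf]
    simp [rowSub, Matrix.mulVec, dotProduct]
  set Sx := ∑ i, zx i * h i with hSxdef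
  set Se := ∑ i : Ω, ze i * f i with hSedef
  have hzero : Sx + lam * Se = 0 := by
    have hx : Sx = lam * ∑ j : Ω, ze j * (A.mulVec h (j : Fin n)) := by
      rw [hSxdef, h1]
      simp only [Pi.smul_apply, smul_eq_mul, Matrix.mulVec, dotProduct,
        Matrix.transpose_apply, rowSub, Matrix.submatrix_apply, id]
      simp only [Finset.mul_sum, Finset.sum_mul]
      rw [Finset.sum_comm]
      exact Finset.sum_congr rfl fun j _ => Finset.sum_congr rfl fun x _ => by ring
    have he : Se = -∑ j : Ω, ze j * (A.mulVec h (j : Fin n)) := by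
      rw [hSedef, ← Finset.sum_neg_distrib]
      congr 1; ext j
      rw [hfval j]; ring
    rw [hx, he]; ring
  have ineq1 : (∑ i ∈ T, |xs i|) - (∑ i ∈ Tᶜ, |xs i|) + Sx + (1/4) * ∑ i ∈ Tᶜ, |h i|
      ≤ l1 (fun i => xs i + h i) := by
    have hsplit : l1 (fun i => xs i + h i) = ∑ i ∈ T, |xs i + h i| + ∑ i ∈ Tᶜ, |xs i + h i| :=
      (Finset.sum_add_sum_compl T _).symm
    have hSxsplit : Sx = ∑ i ∈ T, zx i * h i + ∑ i ∈ Tᶜ, zx i * h i :=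
      (Finset.sum_add_sum_compl T _).symm
    have hT : ∑ i ∈ T, (|xs i| + zx i * h i) ≤ ∑ i ∈ T, |xs i + h i| := by
      apply Finset.sum_le_sum
      intro i hi
      rw [h2T i hi]
      exact key1 _ _
    have hTc : ∑ i ∈ Tᶜ, (zx i * h i + (1/4) * |h i| - |xs i|) ≤ ∑ i ∈ Tᶜ, |xs i + h i| := by
      apply Finset.sum_le_sum
      intro i hi
      have h4 : |zx i| ≤ 3/4 := h2Tc i (Finset.mem_compl.mp hi)
      have h5 : zx i * h i ≤ (3/4) * |h i| :=
        calc zx i * h i ≤ |zx i * h i| := le_abs_self _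
        _ = |zx i| * |h i| := abs_mul _ _
        _ ≤ (3/4) * |h i| := mul_le_mul_of_nonneg_right h4 (abs_nonneg _)
      have h6 : |h i| ≤ |xs i + h i| + |xs i| := by
        have h7 := abs_add_le (xs i + h i) (-xs i)
        rw [abs_neg] at h7
        have h8 : xs i + h i + -xs i = h i := by ring
        rwa [h8] at h7
      linarith
    have e0 : ∑ i ∈ T, (|xs i| + zx i * h i) = (∑ i ∈ T, |xs i|) + ∑ i ∈ T, zx i * h i :=
      Finset.sum_add_distrib
    have e1 : ∑ i ∈ Tᶜ, (zx i * h i + (1/4) * |h i| - |xs i|)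
        = ((∑ i ∈ Tᶜ, zx i * h i) + (1/4) * ∑ i ∈ Tᶜ, |h i|) - ∑ i ∈ Tᶜ, |xs i| := by
      rw [Finset.sum_sub_distrib, Finset.sum_add_distrib, Finset.mul_sum]
    rw [hsplit]
    linarith
  have ineq2 : l1 es + Se + (1/4) * ∑ i ∈ J, |A.mulVec h i|
      ≤ l1 (fun i : Ω => es i + f i) := by
    have hpt : ∀ i : Ω, |es i| + ze i * f i
        + (1/4) * (if (i : Fin n) ∈ S then 0 else |f i|) ≤ |es i + f i| := by
      intro i
      by_cases hiS : (i : Fin n) ∈ S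
      · simp only [hiS, if_true]
        rw [h3S i hiS]
        have := key1 (es i) (f i)
        linarith
      · have hiJ : (i : Fin n) ∈ J := by rw [hJ]; exact Finset.mem_sdiff.mpr ⟨i.2, hiS⟩
        have h4 := h3J i hiJ
        have h5 : ze i * f i ≤ (3/4) * |f i| :=
          calc ze i * f i ≤ |ze i * f i| := le_abs_self _
          _ = |ze i| * |f i| := abs_mul _ _
          _ ≤ (3/4) * |f i| := mul_le_mul_of_nonneg_right h4 (abs_nonneg _)
        simp only [hiS, if_false]
        rw [hes i hiS]
        simp only [zero_add, abs_zero]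
        linarith
    have hsum := Finset.sum_le_sum (fun i (_ : i ∈ Finset.univ) => hpt i)
    have e3 : ∑ i : Ω, (if (i : Fin n) ∈ S then (0:ℝ) else |f i|)
        = ∑ i ∈ J, |A.mulVec h i| := by
      have estep : ∀ i : Ω, (if (i : Fin n) ∈ S then (0:ℝ) else |f i|)
          = (if ¬ ((i : Fin n) ∈ S) then |A.mulVec h (i : Fin n)| else 0) := by
        intro i
        by_cases hs : (i : Fin n) ∈ S <;> simp [hs, hfval i, abs_neg]
      rw [Finset.sum_congr rfl (fun i _ => estep i)]
      rw [Finset.sum_coe_sort Ω (fun j => if ¬ (j ∈ S) then |A.mulVec h j| else 0)]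
      rw [← Finset.sum_filter]
      congr 1
      rw [hJ, Finset.sdiff_eq_filter]
    have e2 : ∑ i : Ω, (|es i| + ze i * f i
          + (1/4) * (if (i : Fin n) ∈ S then 0 else |f i|))
        = l1 es + Se + (1/4) * ∑ i ∈ J, |A.mulVec h i| := by
      rw [Finset.sum_add_distrib, Finset.sum_add_distrib, ← Finset.mul_sum, e3]
      rfl
    rw [← e2]
    exact hsum
  have h2' := mul_le_mul_of_nonneg_left ineq2 hlam.le
  have hexp : lam * (l1 es + Se + (1/4) * ∑ i ∈ J, |A.mulVec h i|)
      = lam * l1 es + lam * Se + (1/4) * (lam * ∑ i ∈ J, |A.mulVec h i|) := by ring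
  rw [hexp] at h2'
  have goal' : (∑ i ∈ T, |xs i|) + lam * l1 es - (∑ i ∈ Tᶜ, |xs i|) +
        (1/4) * ((∑ i ∈ Tᶜ, |h i|) + lam * ∑ i ∈ J, |A.mulVec h i|)
      = ((∑ i ∈ T, |xs i|) - (∑ i ∈ Tᶜ, |xs i|) + (1/4) * ∑ i ∈ Tᶜ, |h i|)
        + (lam * l1 es + (1/4) * (lam * ∑ i ∈ J, |A.mulVec h i|)) := by ring
  rw [ge_iff_le, goal']
  linarith
end
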